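/- arXiv:1308.5624 — 5 statements merged into one kernel-verified Lean document; each statement's English description precedes it below -/
import Mathlib

section
/- Let T : 𝕋^d → 𝕋^d satisfy dist(Tx, Ty) ≤ η dist(x, y) for all x, y, with η ≥ 1, and suppose θ has a density ρ ∈ L^∞ with respect to Lebesgue measure on S. Let z ∈ 𝕋^d, ε ∈ (0, 1/2], r > 0 and let α ≥ 1 be an integer with 2 η^α r ≤ ε. Then (θ ⊗ θ){(ξ, ξ') ∈ S × S : there exist an integer j with 1 ≤ j ≤ α and a point x ∈ 𝕋^d such that dist(x + εξ, z) < r and dist(T^j x + εξ', z) < r} ≤ 3^d · K_d · ‖ρ‖_∞ · (2r/ε)^d · Σ_{j=1}^{α} η^{jd}, where K_d is the Lebesgue volume of the closed Euclidean unit ball of ℝ^d. -/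
open MeasureTheory Metric Set Filter Topology

noncomputable section

/-- The `d`-dimensional torus `(ℝ/ℤ)^d`. -/
abbrev Torus (d : ℕ) := Fin d → AddCircle (1 : ℝ)

/-- Translation of a torus point by a vector `w ∈ ℝ^d` (via the projection `ℝ^d → 𝕋^d`). -/
def tr {d : ℕ} (x : Torus d) (w : EuclideanSpace ℝ (Fin d)) : Torus d :=
  fun i => x i + (w i : AddCircle (1 : ℝ))

/-- The translation-invariant metric on the torus induced by the Euclidean norm on `ℝ^d`. -/
def tdist {d : ℕ} (x y : Torus d) : ℝ :=
  Real.sqrt (∑ i, dist (x i) (y i) ^ 2)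

/-- The open ball of center `p` and radius `r` in the torus, for the metric `tdist`. -/
def tball {d : ℕ} (p : Torus d) (r : ℝ) : Set (Torus d) := {y | tdist y p < r}

/-- The observable process `X_i(x, ξ̄) = -log dist(T^i x + ε ξ_i, z)`. -/
def Xobs {d : ℕ} (T : Torus d → Torus d) (z : Torus d) (ε : ℝ) (i : ℕ)
    (p : Torus d × (ℕ → EuclideanSpace ℝ (Fin d))) : ℝ :=
  - Real.log (tdist (tr (T^[i] p.1) (ε • p.2 i)) z)

/-- `Θ` is the infinite product measure `θ^{⊗ℕ}`: every finite-dimensional marginal of `Θ`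
is the corresponding finite product of copies of `θ`. -/
def IsIIDProduct {d : ℕ} (θ : Measure (EuclideanSpace ℝ (Fin d)))
    (Θ : Measure (ℕ → EuclideanSpace ℝ (Fin d))) : Prop :=
  ∀ n : ℕ, Θ.map (fun ξ (i : Fin n) => ξ i) = Measure.pi fun _ : Fin n => θ

/-- `(T, ν)` has polynomial decay of correlations with constant `C`:
for every `g ∈ L¹(ν)`, every bounded Borel `h` and every `t ≥ 1`,
`|∫ g ⬝ (h ∘ T^t) dν − (∫ g dν)(∫ h dν)| ≤ C ‖h‖_∞ ‖g‖_{L¹(ν)} t^{-2}`. -/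
def DecayCor {d : ℕ} (T : Torus d → Torus d) (ν : Measure (Torus d)) (C : ℝ) : Prop :=
  ∀ g : Torus d → ℝ, Integrable g ν →
    ∀ h : Torus d → ℝ, Measurable h → ∀ K : ℝ, (∀ x, |h x| ≤ K) →
      ∀ t : ℕ, 1 ≤ t →
        |(∫ x, g x * h (T^[t] x) ∂ν) - (∫ x, g x ∂ν) * ∫ x, h x ∂ν| ≤
          C * K * (∫ x, |g x| ∂ν) / (t : ℝ) ^ 2

/-!
Fix `ξ` and `j`, and put `x₀ = z - εξ`. If `x + εξ ∈ B(z, r)` then `dist(x, x₀) < r`, so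
`dist(T^j x, T^j x₀) < η^j r`; hence `T^j x + εξ' ∈ B(z, r)` forces `T^j x₀ + εξ' ∈ B(z, 2η^j r)`,
a condition on `ξ'` alone. Lifting to `ℝ^d`, the points `εξ'` with `‖ξ'‖ ≤ 1` satisfying it lie in
the Euclidean balls of radius `2η^j r` around the lifts `c + k` of `z - T^j x₀` with
`c ∈ [-1/2, 1/2]^d` and `k ∈ {-1, 0, 1}^d` (because `ε ≤ 1/2`). Their total volume in the
`ξ'`-variable is `3^d K_d (2η^j r/ε)^d`, which `‖ρ‖_∞` turns into a bound on the `θ`-measure of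
the slice; Fubini and a union bound over `j` conclude.
-/

namespace AddCircle

theorem exists_coe_eq_abs_le_half (c : AddCircle (1 : ℝ)) :
    ∃ a : ℝ, (a : AddCircle (1 : ℝ)) = c ∧ |a| ≤ 1 / 2 := by
  obtain ⟨b, rfl⟩ := QuotientAddGroup.mk_surjective c
  refine ⟨b - round b, ?_, abs_sub_round b⟩
  rw [QuotientAddGroup.mk_sub, sub_eq_self, AddCircle.coe_eq_zero_iff]
  exact ⟨round b, by simp⟩

theorem exists_dist_coe_eq_abs {a c : ℝ} (ha : |a| ≤ 1 / 2) (hc : |c| ≤ 1 / 2) :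
    ∃ k ∈ Finset.Icc (-1 : ℤ) 1,
      dist (a : AddCircle (1 : ℝ)) (c : AddCircle (1 : ℝ)) = |a - (c + k)| := by
  have hac : |a - c| ≤ 1 := (abs_sub _ _).trans (by linarith)
  obtain ⟨hlo, hhi⟩ := abs_le.mp hac
  have h₁ : ((-1 : ℤ) : ℝ) < round (a - c) + 1 := by
    push_cast; linarith [sub_half_lt_round (a - c)]
  have h₂ : (round (a - c) : ℝ) < ((1 : ℤ) : ℝ) + 1 := by
    push_cast; linarith [round_le_add_half (a - c)]
  refine ⟨round (a - c), Finset.mem_Icc.mpr ⟨?_, ?_⟩, ?_⟩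
  · exact Int.lt_add_one_iff.mp (by exact_mod_cast h₁)
  · exact Int.lt_add_one_iff.mp (by exact_mod_cast h₂)
  · rw [dist_eq_norm, ← QuotientAddGroup.mk_sub, AddCircle.norm_eq]
    simp only [inv_one, one_mul, mul_one]
    ring_nf

end AddCircle

theorem MeasureTheory.withDensity_ofReal_apply_le {α : Type*} [MeasurableSpace α]
    (μ : Measure α) [SFinite μ] (ρ : α → ℝ) (E : Set α) :
    μ.withDensity (fun x => ENNReal.ofReal (ρ x)) E ≤ eLpNorm ρ ⊤ μ * μ E := by
  rw [withDensity_apply' _ E, eLpNorm_exponent_top, ← setLIntegral_const]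
  refine lintegral_mono_ae (ae_restrict_of_ae ?_)
  filter_upwards [ae_le_eLpNormEssSup (f := ρ) (μ := μ)] with x hx
  exact (Real.ofReal_le_enorm _).trans hx

namespace Torus

variable {d : ℕ}

theorem tdist_eq_dist (x y : Torus d) : tdist x y = dist (WithLp.toLp 2 x) (WithLp.toLp 2 y) :=
  (PiLp.dist_eq_of_L2 _ _).symm

theorem tdist_triangle (x y z : Torus d) : tdist x z ≤ tdist x y + tdist y z := by
  simpa only [tdist_eq_dist] using dist_triangle _ _ _

theorem tdist_comm (x y : Torus d) : tdist x y = tdist y x := by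
  simp only [tdist_eq_dist, dist_comm]

theorem tdist_tr_tr (x y : Torus d) (w : EuclideanSpace ℝ (Fin d)) :
    tdist (tr x w) (tr y w) = tdist x y := by
  simp only [tdist, tr, dist_add_right]

theorem tr_tr_neg (z : Torus d) (w : EuclideanSpace ℝ (Fin d)) : tr (tr z (-w)) w = z := by
  funext i
  simp [tr]

theorem continuous_tr (x : Torus d) : Continuous (tr x) := by
  unfold tr
  fun_prop

theorem tdist_iterate_le {T : Torus d → Torus d} {η : ℝ} (hη : 0 ≤ η)
    (hT : ∀ x y, tdist (T x) (T y) ≤ η * tdist x y) (j : ℕ) (x y : Torus d) :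
    tdist (T^[j] x) (T^[j] y) ≤ η ^ j * tdist x y := by
  induction j generalizing x y with
  | zero => simp
  | succ j ih =>
    rw [Function.iterate_succ_apply, Function.iterate_succ_apply, pow_succ, mul_assoc]
    exact (ih _ _).trans (mul_le_mul_of_nonneg_left (hT x y) (pow_nonneg hη j))

theorem exists_dist_eq_tdist_tr (w z : Torus d) {c : Fin d → ℝ}
    (hcz : ∀ i, (c i : AddCircle (1 : ℝ)) = z i - w i) (hc : ∀ i, |c i| ≤ 1 / 2)
    {u : EuclideanSpace ℝ (Fin d)} (hu : ∀ i, |u i| ≤ 1 / 2) :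
    ∃ k ∈ Fintype.piFinset fun _ : Fin d => Finset.Icc (-1 : ℤ) 1,
      dist u (WithLp.toLp 2 fun i => c i + k i) = tdist (tr w u) z := by
  choose k hk hdist using fun i => AddCircle.exists_dist_coe_eq_abs (hu i) (hc i)
  refine ⟨k, Fintype.mem_piFinset.mpr hk, ?_⟩
  rw [EuclideanSpace.dist_eq, tdist]
  congr 1
  refine Finset.sum_congr rfl fun i _ => ?_
  rw [Real.dist_eq, ← hdist i, hcz i, tr, dist_eq_norm, dist_eq_norm, sub_sub_eq_add_sub,
    add_comm (w i)]

theorem volume_preimage_tball_inter_closedBall_le (w z : Torus d) {ε s : ℝ} (hε0 : 0 < ε)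
    (hε : ε ≤ 1 / 2) (hs : 0 ≤ s) :
    volume ((fun ξ : EuclideanSpace ℝ (Fin d) => tr w (ε • ξ)) ⁻¹' tball z s ∩
        closedBall 0 1) ≤
      3 ^ d * ENNReal.ofReal ((s / ε) ^ d) *
        volume (closedBall (0 : EuclideanSpace ℝ (Fin d)) 1) := by
  choose c hcz hc using fun i => AddCircle.exists_coe_eq_abs_le_half (z i - w i)
  set K := Fintype.piFinset fun _ : Fin d => Finset.Icc (-1 : ℤ) 1
  have hcover : (fun ξ : EuclideanSpace ℝ (Fin d) => tr w (ε • ξ)) ⁻¹' tball z s ∩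
      closedBall 0 1 ⊆ ⋃ k ∈ K, closedBall (ε⁻¹ • WithLp.toLp 2 fun i => c i + k i) (s / ε) := by
    rintro ξ ⟨hξs, hξ1⟩
    have hu : ∀ i, |(ε • ξ) i| ≤ 1 / 2 := fun i => by
      rw [PiLp.smul_apply, smul_eq_mul, abs_mul, abs_of_pos hε0]
      have := (PiLp.norm_apply_le ξ i).trans (mem_closedBall_zero_iff.mp hξ1)
      rw [Real.norm_eq_abs] at this
      nlinarith [abs_nonneg (ξ i)]
    obtain ⟨k, hk, hdist⟩ := exists_dist_eq_tdist_tr w z hcz hc hu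
    refine mem_biUnion hk (mem_closedBall.mpr ?_)
    have : dist ξ (ε⁻¹ • WithLp.toLp 2 fun i => c i + k i) = ε⁻¹ * tdist (tr w (ε • ξ)) z := by
      conv_lhs => rw [← inv_smul_smul₀ hε0.ne' ξ]
      rw [dist_smul₀, hdist, Real.norm_of_nonneg (inv_nonneg.mpr hε0.le)]
    rw [this, inv_mul_eq_div]
    exact div_le_div_of_nonneg_right hξs.le hε0.le
  calc _ ≤ ∑ k ∈ K, volume (closedBall (ε⁻¹ • WithLp.toLp 2 fun i => c i + k i) (s / ε)) :=
        (measure_mono hcover).trans (measure_biUnion_finset_le K _)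
    _ = 3 ^ d * ENNReal.ofReal ((s / ε) ^ d) *
          volume (closedBall (0 : EuclideanSpace ℝ (Fin d)) 1) := by
      simp_rw [Measure.addHaar_closedBall' _ _ (div_nonneg hs hε0.le), finrank_euclideanSpace_fin]
      rw [Finset.sum_const, nsmul_eq_mul, mul_assoc]
      simp [K, Fintype.card_piFinset]

theorem tr_iterate_mem_tball {T : Torus d → Torus d} {η : ℝ} (hη : 0 ≤ η)
    (hT : ∀ x y, tdist (T x) (T y) ≤ η * tdist x y) {j : ℕ} {x z : Torus d}
    {u u' : EuclideanSpace ℝ (Fin d)} {r : ℝ} (hx : tr x u ∈ tball z r)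
    (hx' : tr (T^[j] x) u' ∈ tball z r) :
    tr (T^[j] (tr z (-u))) u' ∈ tball z (η ^ j * r + r) := by
  have hx₀ : tdist x (tr z (-u)) < r := by
    rwa [← tdist_tr_tr x _ u, tr_tr_neg]
  calc tdist (tr (T^[j] (tr z (-u))) u') z
      ≤ tdist (tr (T^[j] (tr z (-u))) u') (tr (T^[j] x) u') + tdist (tr (T^[j] x) u') z :=
        tdist_triangle _ _ _
    _ = tdist (T^[j] x) (T^[j] (tr z (-u))) + tdist (tr (T^[j] x) u') z := by
        rw [tdist_tr_tr, tdist_comm]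
    _ < η ^ j * r + r := by
        refine add_lt_add_of_le_of_lt ?_ hx'
        exact (tdist_iterate_le hη hT j _ _).trans
          (mul_le_mul_of_nonneg_left hx₀.le (pow_nonneg hη j))

def returnPairs (T : Torus d → Torus d) (z : Torus d) (ε r : ℝ) (j : ℕ) :
    Set (EuclideanSpace ℝ (Fin d) × EuclideanSpace ℝ (Fin d)) :=
  {q | ∃ x, tr x (ε • q.1) ∈ tball z r ∧ tr (T^[j] x) (ε • q.2) ∈ tball z r}

theorem isOpen_tball (z : Torus d) (r : ℝ) : IsOpen (tball z r) := by
  have : tball z r = (WithLp.toLp 2) ⁻¹' ball (WithLp.toLp 2 z) r := by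
    ext y; simp [tball, tdist_eq_dist]
  rw [this]
  exact isOpen_ball.preimage (PiLp.continuous_toLp 2 _)

theorem isOpen_returnPairs (T : Torus d → Torus d) (z : Torus d) (ε r : ℝ) (j : ℕ) :
    IsOpen (returnPairs T z ε r j) := by
  have hball : ∀ x : Torus d,
      IsOpen ((fun ξ : EuclideanSpace ℝ (Fin d) => tr x (ε • ξ)) ⁻¹' tball z r) :=
    fun x => (isOpen_tball z r).preimage ((continuous_tr x).comp (continuous_const_smul ε))
  have : returnPairs T z ε r j = ⋃ x, ((fun ξ => tr x (ε • ξ)) ⁻¹' tball z r) ×ˢ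
      ((fun ξ => tr (T^[j] x) (ε • ξ)) ⁻¹' tball z r) := by
    ext q; simp [returnPairs]
  rw [this]
  exact isOpen_iUnion fun x => (hball x).prod (hball _)

theorem prod_returnPairs_le {T : Torus d → Torus d} {η : ℝ} (hη : 1 ≤ η)
    (hT : ∀ x y, tdist (T x) (T y) ≤ η * tdist x y)
    (θ : Measure (EuclideanSpace ℝ (Fin d))) [IsProbabilityMeasure θ]
    (ρ : EuclideanSpace ℝ (Fin d) → ℝ)
    (hθρ : θ = (volume.restrict (closedBall 0 1)).withDensity fun ξ => ENNReal.ofReal (ρ ξ))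
    (hρ : MemLp ρ ⊤ (volume.restrict (closedBall 0 1)))
    (z : Torus d) {ε r : ℝ} (hε0 : 0 < ε) (hε : ε ≤ 1 / 2) (hr : 0 ≤ r) (j : ℕ) :
    (θ.prod θ) (returnPairs T z ε r j) ≤
      ENNReal.ofReal ((3 : ℝ) ^ d *
        (volume (closedBall (0 : EuclideanSpace ℝ (Fin d)) 1)).toReal *
        (eLpNorm ρ ⊤ (volume.restrict (closedBall 0 1))).toReal *
        (2 * r / ε) ^ d * η ^ (j * d)) := by
  set N := eLpNorm ρ ⊤ (volume.restrict (closedBall (0 : EuclideanSpace ℝ (Fin d)) 1))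
  set K := volume (closedBall (0 : EuclideanSpace ℝ (Fin d)) 1)
  set s := η ^ j * r + r
  have hslice : ∀ ξ, θ (Prod.mk ξ ⁻¹' returnPairs T z ε r j) ≤
      N * (3 ^ d * ENNReal.ofReal ((s / ε) ^ d) * K) := fun ξ => calc
    _ ≤ θ ((fun ξ' => tr (T^[j] (tr z (-(ε • ξ)))) (ε • ξ')) ⁻¹' tball z s) :=
        measure_mono <| by
          rintro ξ' ⟨x, hx, hx'⟩
          exact tr_iterate_mem_tball (by linarith) hT hx hx'
    _ ≤ N * volume ((fun ξ' => tr (T^[j] (tr z (-(ε • ξ)))) (ε • ξ')) ⁻¹' tball z s ∩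
          closedBall 0 1) := by
        rw [hθρ, ← Measure.restrict_apply' measurableSet_closedBall]
        exact withDensity_ofReal_apply_le _ ρ _
    _ ≤ N * (3 ^ d * ENNReal.ofReal ((s / ε) ^ d) * K) := by
        gcongr
        exact volume_preimage_tball_inter_closedBall_le _ z hε0 hε (by positivity)
  have hs : (s / ε) ^ d ≤ (2 * r / ε) ^ d * η ^ (j * d) := by
    rw [pow_mul, ← mul_pow]
    gcongr
    rw [div_mul_eq_mul_div]
    gcongr
    nlinarith [one_le_pow₀ (n := j) hη]
  calc (θ.prod θ) (returnPairs T z ε r j)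
      = ∫⁻ ξ, θ (Prod.mk ξ ⁻¹' returnPairs T z ε r j) ∂θ :=
        Measure.prod_apply (isOpen_returnPairs T z ε r j).measurableSet
    _ ≤ N * (3 ^ d * ENNReal.ofReal ((s / ε) ^ d) * K) := by
        simpa using lintegral_mono hslice (μ := θ)
    _ = 3 ^ d * K * N * ENNReal.ofReal ((s / ε) ^ d) := by ring
    _ ≤ 3 ^ d * K * N * ENNReal.ofReal ((2 * r / ε) ^ d * η ^ (j * d)) := by gcongr
    _ = _ := by
        conv_rhs =>
          rw [mul_assoc (3 ^ d * K.toReal * N.toReal), ENNReal.ofReal_mul (by positivity),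
            ENNReal.ofReal_mul (by positivity), ENNReal.ofReal_mul (by positivity),
            ENNReal.ofReal_toReal measure_closedBall_lt_top.ne, ENNReal.ofReal_toReal hρ.2.ne,
            ENNReal.ofReal_pow (by norm_num), ENNReal.ofReal_ofNat]

end Torus

theorem statement_3_general {d : ℕ}
    (T : Torus d → Torus d) (η : ℝ) (hη : 1 ≤ η)
    (hT : ∀ x y, tdist (T x) (T y) ≤ η * tdist x y)
    (θ : Measure (EuclideanSpace ℝ (Fin d))) [IsProbabilityMeasure θ]
    (ρ : EuclideanSpace ℝ (Fin d) → ℝ)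
    (hθρ : θ = (volume.restrict (Metric.closedBall 0 1)).withDensity
        fun ξ => ENNReal.ofReal (ρ ξ))
    (hρ : MemLp ρ ⊤ (volume.restrict (Metric.closedBall 0 1)))
    (z : Torus d) (ε : ℝ) (hε0 : 0 < ε) (hε : ε ≤ 1 / 2)
    (r : ℝ) (hr : 0 < r) (α : ℕ) :
    (θ.prod θ) {q : EuclideanSpace ℝ (Fin d) × EuclideanSpace ℝ (Fin d) |
        q.1 ∈ Metric.closedBall 0 1 ∧ q.2 ∈ Metric.closedBall 0 1 ∧
        ∃ j : ℕ, 1 ≤ j ∧ j ≤ α ∧ ∃ x : Torus d,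
          tdist (tr x (ε • q.1)) z < r ∧ tdist (tr (T^[j] x) (ε • q.2)) z < r} ≤
      ENNReal.ofReal ((3 : ℝ) ^ d *
        (volume (Metric.closedBall (0 : EuclideanSpace ℝ (Fin d)) 1)).toReal *
        (eLpNorm ρ ⊤ (volume.restrict (Metric.closedBall 0 1))).toReal *
        (2 * r / ε) ^ d * ∑ j ∈ Finset.Icc 1 α, η ^ (j * d)) := by
  calc _ ≤ (θ.prod θ) (⋃ j ∈ Finset.Icc 1 α, Torus.returnPairs T z ε r j) :=
        measure_mono <| by
          rintro q ⟨-, -, j, hj1, hjα, hx⟩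
          exact mem_biUnion (Finset.mem_Icc.mpr ⟨hj1, hjα⟩) hx
    _ ≤ ∑ j ∈ Finset.Icc 1 α, (θ.prod θ) (Torus.returnPairs T z ε r j) :=
        measure_biUnion_finset_le _ _
    _ ≤ _ := Finset.sum_le_sum fun j _ =>
        Torus.prod_returnPairs_le hη hT θ ρ hθρ hρ z hε0 hε hr.le j
    _ = _ := by
        rw [← ENNReal.ofReal_sum_of_nonneg fun j _ => by positivity, Finset.mul_sum]

/-- If `T` is `η`-Lipschitz (`η ≥ 1`), `θ` has density `ρ ∈ L^∞` w.r.t.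
Lebesgue measure on the closed unit ball `S`, `ε ∈ (0, 1/2]`, `r > 0`, `α ≥ 1` and
`2 η^α r ≤ ε`, then the `θ⊗θ`-measure of the pairs `(ξ, ξ')` for which the approximated
first return time of `B(z,r)` is `≤ α` is bounded by
`3^d · K_d · ‖ρ‖_∞ · (2r/ε)^d · Σ_{j=1}^{α} η^{jd}`. -/
theorem statement_3 {d : ℕ} (hd : 1 ≤ d)
    (T : Torus d → Torus d) (η : ℝ) (hη : 1 ≤ η)
    (hT : ∀ x y, tdist (T x) (T y) ≤ η * tdist x y)
    (θ : Measure (EuclideanSpace ℝ (Fin d))) [IsProbabilityMeasure θ]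
    (ρ : EuclideanSpace ℝ (Fin d) → ℝ)
    (hθρ : θ = (volume.restrict (Metric.closedBall 0 1)).withDensity
        fun ξ => ENNReal.ofReal (ρ ξ))
    (hρ : MemLp ρ ⊤ (volume.restrict (Metric.closedBall 0 1)))
    (z : Torus d) (ε : ℝ) (hε0 : 0 < ε) (hε : ε ≤ 1 / 2)
    (r : ℝ) (hr : 0 < r) (α : ℕ) (hα : 1 ≤ α) (hαr : 2 * η ^ α * r ≤ ε) :
    (θ.prod θ) {q : EuclideanSpace ℝ (Fin d) × EuclideanSpace ℝ (Fin d) |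
        q.1 ∈ Metric.closedBall 0 1 ∧ q.2 ∈ Metric.closedBall 0 1 ∧
        ∃ j : ℕ, 1 ≤ j ∧ j ≤ α ∧ ∃ x : Torus d,
          tdist (tr x (ε • q.1)) z < r ∧ tdist (tr (T^[j] x) (ε • q.2)) z < r} ≤
      ENNReal.ofReal ((3 : ℝ) ^ d *
        (volume (Metric.closedBall (0 : EuclideanSpace ℝ (Fin d)) 1)).toReal *
        (eLpNorm ρ ⊤ (volume.restrict (Metric.closedBall 0 1))).toReal *
        (2 * r / ε) ^ d * ∑ j ∈ Finset.Icc 1 α, η ^ (j * d)) :=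
  statement_3_general T η hη hT θ ρ hθρ hρ z ε hε0 hε r hr α
end
end

section
/- Let ν be a Borel probability measure on 𝕋 = ℝ/ℤ, z ∈ 𝕋, and ε ∈ (0, 1/4] with ν(B(z, ε)) > 0 and ν{x : dist(x, z) = ε} = 0. For u ∈ ℝ set b_m = log(m · ν(B(z, ε)) / ε) and u_m = u + b_m. Then m · (ν ⊗ θ){(x, ξ) ∈ 𝕋 × [−1,1] : dist(x + εξ, z) < e^{−u_m}} → e^{−u} as m → ∞. Equivalently, with τ = e^{−u}, the sequence u_m satisfies m · ℙ(X_0 > u_m) → τ. -/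
/-
Fix `x`. Since `ξ` is uniform on `[-1, 1]` and, for `ε, r ≤ 1/4`, the ball `B(z, r)` does not wrap
around the circle along the segment `x + ε[-1, 1]`, the `x`-section of the event
`dist(x + εξ, z) < r` has `θ`-measure exactly `r/ε` when `dist(x, z) < ε - r`, zero when
`dist(x, z) > ε + r`, and at most `r/ε` in any case. Integrating in `x`, `(ε/r) · ℙ(dist < r)` is
squeezed between `ν(B(z, ε - r))` and `ν(B̄(z, ε + r))`, and both tend to `ν(B(z, ε))` as `r → 0⁺`
because the sphere `{dist(·, z) = ε}` is `ν`-null. Finally `e^{-u_m} = e^{-u} ε / (m ν(B(z, ε)))`.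
-/

open MeasureTheory Metric Set Filter Topology

noncomputable section

/-- The uniform (normalized Lebesgue) probability measure on the interval `[-1, 1]`. -/
def unifIcc : Measure ℝ := (2 : ENNReal)⁻¹ • volume.restrict (Set.Icc (-1 : ℝ) 1)

/-- The observable process on the circle:
`X_i(x, ξ̄) = -log dist(T^i x + ε ξ_i, z)`. -/
def X1 (T : AddCircle (1 : ℝ) → AddCircle (1 : ℝ)) (z : AddCircle (1 : ℝ)) (ε : ℝ) (i : ℕ)
    (p : AddCircle (1 : ℝ) × (ℕ → ℝ)) : ℝ :=
  - Real.log (dist (T^[i] p.1 + ((ε * p.2 i : ℝ) : AddCircle (1 : ℝ))) z)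

/-- `Θ` is the infinite product measure `θ^{⊗ℕ}`: every finite-dimensional marginal of `Θ`
is the corresponding finite product of copies of `θ`. -/
def IsIIDProduct1 (θ : Measure ℝ) (Θ : Measure (ℕ → ℝ)) : Prop :=
  ∀ n : ℕ, Θ.map (fun ξ (i : Fin n) => ξ i) = Measure.pi fun _ : Fin n => θ

namespace AddCircle

theorem norm_coe_lt_iff_abs_lt {p s r : ℝ} (h : |s| + r ≤ |p|) :
    ‖(s : AddCircle p)‖ < r ↔ |s| < r := by
  refine ⟨fun hs => ?_, fun hs => QuotientAddGroup.norm_mk_le_norm.trans_lt hs⟩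
  rw [norm_eq] at hs
  rcases eq_or_ne (round (p⁻¹ * s)) 0 with hk | hk
  · simpa [hk] using hs
  · have hk1 : (1 : ℝ) ≤ |(round (p⁻¹ * s) : ℝ)| := by exact_mod_cast Int.one_le_abs hk
    have : |p| ≤ |round (p⁻¹ * s) * p| := by
      rw [abs_mul]; exact le_mul_of_one_le_left (abs_nonneg p) hk1
    have := abs_sub_abs_le_abs_sub (round (p⁻¹ * s) * p) s
    rw [abs_sub_comm] at this
    linarith

theorem exists_coe_eq_and_norm_eq_abs {p : ℝ} (y : AddCircle p) :
    ∃ a : ℝ, (a : AddCircle p) = y ∧ ‖y‖ = |a| := by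
  obtain ⟨c, rfl⟩ := QuotientAddGroup.mk_surjective y
  refine ⟨c - round (p⁻¹ * c) * p, ?_, norm_eq p⟩
  rw [coe_sub, sub_eq_self]
  exact (coe_eq_zero_iff p).mpr ⟨round (p⁻¹ * c), zsmul_eq_mul _ _⟩

end AddCircle

section BallMeasure

variable {X : Type*} [PseudoMetricSpace X] [MeasurableSpace X] (μ : Measure X) (z : X) (ε : ℝ)

theorem tendsto_measure_ball_nhdsLT :
    Tendsto (fun s => μ (ball z s)) (𝓝[<] ε) (𝓝 (μ (ball z ε))) := by
  have : (atTop : Filter (Iio ε)).IsCountablyGenerated := by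
    rw [← comap_coe_Iio_nhdsLT ε]; infer_instance
  have hU : ball z ε = ⋃ s : Iio ε, ball z s := by
    rw [← biUnion_lt_ball z ε, iUnion_subtype]; rfl
  rw [← map_coe_Iio_atTop ε, tendsto_map'_iff, hU]
  exact tendsto_measure_iUnion_atTop fun s t hst => ball_subset_ball (Subtype.mono_coe _ hst)

theorem tendsto_measure_closedBall_nhdsGT [OpensMeasurableSpace X] [IsFiniteMeasure μ] :
    Tendsto (fun s => μ (closedBall z s)) (𝓝[>] ε) (𝓝 (μ (closedBall z ε))) := by
  rw [← biInter_gt_closedBall z ε]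
  exact tendsto_measure_biInter_gt (fun _ _ => measurableSet_closedBall.nullMeasurableSet)
    (fun _ _ _ hst => closedBall_subset_closedBall hst) ⟨ε + 1, by linarith, measure_ne_top μ _⟩

end BallMeasure

-- The event `{X₀ > -log r}`.
def noisyHitSet (ε : ℝ) (z : AddCircle (1 : ℝ)) (r : ℝ) : Set (AddCircle (1 : ℝ) × ℝ) :=
  {p | dist (p.1 + ((ε * p.2 : ℝ) : AddCircle (1 : ℝ))) z < r}

theorem unifIcc_apply (s : Set ℝ) : unifIcc s = 2⁻¹ * volume (s ∩ Icc (-1) 1) := by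
  rw [unifIcc, Measure.smul_apply, Measure.restrict_apply' measurableSet_Icc, smul_eq_mul]

instance : IsProbabilityMeasure unifIcc :=
  ⟨by rw [unifIcc_apply, univ_inter, Real.volume_Icc, show (1 : ℝ) - -1 = 2 by norm_num,
    ENNReal.ofReal_ofNat, ENNReal.inv_mul_cancel two_ne_zero ENNReal.ofNat_ne_top]⟩

theorem exists_coe_eq_sub_and_dist_eq_abs (x z : AddCircle (1 : ℝ)) :
    ∃ a : ℝ, (a : AddCircle (1 : ℝ)) = x - z ∧ dist x z = |a| ∧ |a| ≤ 1 / 2 := by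
  obtain ⟨a, ha, hxz⟩ := AddCircle.exists_coe_eq_and_norm_eq_abs (x - z)
  refine ⟨a, ha, by rw [dist_eq_norm, hxz], ?_⟩
  simpa [← hxz] using AddCircle.norm_le_half_period 1 one_ne_zero (x := x - z)

section NoisySection

variable {ε r a : ℝ} {x z : AddCircle (1 : ℝ)}

theorem dist_add_coe_mul_lt_iff (hε0 : 0 < ε) (hε : ε ≤ 1 / 4) (hr : r ≤ 1 / 4)
    (ha : (a : AddCircle (1 : ℝ)) = x - z) (ha' : |a| ≤ 1 / 2) {ξ : ℝ}
    (hξ : ξ ∈ Icc (-1 : ℝ) 1) :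
    dist (x + ((ε * ξ : ℝ) : AddCircle (1 : ℝ))) z < r ↔ ξ ∈ Ioo ((-a - r) / ε) ((r - a) / ε) := by
  have hεξ : |ε * ξ| ≤ ε := by
    rw [abs_mul, abs_of_pos hε0]; exact mul_le_of_le_one_right hε0.le (abs_le.mpr hξ)
  have hdist : dist (x + ((ε * ξ : ℝ) : AddCircle (1 : ℝ))) z
      = ‖((a + ε * ξ : ℝ) : AddCircle (1 : ℝ))‖ := by
    rw [dist_eq_norm, AddCircle.coe_add, ha]; abel_nf
  rw [hdist, AddCircle.norm_coe_lt_iff_abs_lt (by rw [abs_one]; linarith [abs_add_le a (ε * ξ)]),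
    abs_lt, mem_Ioo, div_lt_iff₀ hε0, lt_div_iff₀ hε0]
  constructor <;> rintro ⟨h1, h2⟩ <;> constructor <;> linarith

theorem unifIcc_dist_lt (hε0 : 0 < ε) (hε : ε ≤ 1 / 4) (hr : r ≤ 1 / 4)
    (ha : (a : AddCircle (1 : ℝ)) = x - z) (ha' : |a| ≤ 1 / 2) :
    unifIcc {ξ | dist (x + ((ε * ξ : ℝ) : AddCircle (1 : ℝ))) z < r}
      = 2⁻¹ * volume (Ioo ((-a - r) / ε) ((r - a) / ε) ∩ Icc (-1) 1) := by
  rw [unifIcc_apply]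
  congr 2
  ext ξ
  exact and_congr_left (dist_add_coe_mul_lt_iff hε0 hε hr ha ha')

theorem two_inv_mul_volume_Ioo (hε0 : 0 < ε) :
    2⁻¹ * volume (Ioo ((-a - r) / ε) ((r - a) / ε)) = ENNReal.ofReal (r / ε) := by
  rw [Real.volume_Ioo, show (r - a) / ε - (-a - r) / ε = 2 * (r / ε) by field_simp; ring,
    ENNReal.ofReal_mul zero_le_two, ENNReal.ofReal_ofNat, ← mul_assoc,
    ENNReal.inv_mul_cancel two_ne_zero ENNReal.ofNat_ne_top, one_mul]

theorem unifIcc_dist_lt_le (hε0 : 0 < ε) (hε : ε ≤ 1 / 4) (hr : r ≤ 1 / 4) :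
    unifIcc {ξ | dist (x + ((ε * ξ : ℝ) : AddCircle (1 : ℝ))) z < r} ≤ ENNReal.ofReal (r / ε) := by
  obtain ⟨a, ha, -, ha'⟩ := exists_coe_eq_sub_and_dist_eq_abs x z
  rw [unifIcc_dist_lt hε0 hε hr ha ha', ← two_inv_mul_volume_Ioo (a := a) hε0]
  gcongr
  exact inter_subset_left

theorem unifIcc_dist_lt_of_dist_lt (hε0 : 0 < ε) (hε : ε ≤ 1 / 4) (hr : r ≤ 1 / 4)
    (hxz : dist x z < ε - r) :
    unifIcc {ξ | dist (x + ((ε * ξ : ℝ) : AddCircle (1 : ℝ))) z < r} = ENNReal.ofReal (r / ε) := by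
  obtain ⟨a, ha, hxa, ha'⟩ := exists_coe_eq_sub_and_dist_eq_abs x z
  have hIoo : Ioo ((-a - r) / ε) ((r - a) / ε) ⊆ Icc (-1) 1 := by
    rw [hxa, abs_lt] at hxz
    refine Ioo_subset_Icc_self.trans (Icc_subset_Icc ?_ ?_)
    · rw [le_div_iff₀ hε0]; linarith
    · rw [div_le_iff₀ hε0]; linarith
  rw [unifIcc_dist_lt hε0 hε hr ha ha', inter_eq_left.mpr hIoo, two_inv_mul_volume_Ioo hε0]

theorem unifIcc_dist_lt_of_lt_dist (hε0 : 0 < ε) (hε : ε ≤ 1 / 4) (hr : r ≤ 1 / 4)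
    (hxz : ε + r < dist x z) :
    unifIcc {ξ | dist (x + ((ε * ξ : ℝ) : AddCircle (1 : ℝ))) z < r} = 0 := by
  obtain ⟨a, ha, hxa, ha'⟩ := exists_coe_eq_sub_and_dist_eq_abs x z
  have hdisj : Ioo ((-a - r) / ε) ((r - a) / ε) ∩ Icc (-1) 1 = ∅ := by
    rw [hxa] at hxz
    refine eq_empty_of_forall_notMem fun ξ ⟨⟨h1, h2⟩, hξ1, hξ2⟩ => ?_
    rw [div_lt_iff₀ hε0] at h1
    rw [lt_div_iff₀ hε0] at h2
    rcases abs_cases a with ⟨h, -⟩ | ⟨h, -⟩ <;> rw [h] at hxz <;> nlinarith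
  rw [unifIcc_dist_lt hε0 hε hr ha ha', hdisj, measure_empty, mul_zero]

end NoisySection

section NoisyHitProbability

variable {ε r : ℝ} {z : AddCircle (1 : ℝ)} (ν : Measure (AddCircle (1 : ℝ)))

theorem measurableSet_noisyHitSet : MeasurableSet (noisyHitSet ε z r) := by
  have : Continuous fun p : AddCircle (1 : ℝ) × ℝ =>
      dist (p.1 + ((ε * p.2 : ℝ) : AddCircle (1 : ℝ))) z := by fun_prop
  exact (isOpen_lt this continuous_const).measurableSet

theorem prod_noisyHitSet :
    (ν.prod unifIcc) (noisyHitSet ε z r)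
      = ∫⁻ x, unifIcc {ξ | dist (x + ((ε * ξ : ℝ) : AddCircle (1 : ℝ))) z < r} ∂ν :=
  Measure.prod_apply measurableSet_noisyHitSet

theorem ofReal_mul_measure_ball_le_prod_noisyHitSet (hε0 : 0 < ε) (hε : ε ≤ 1 / 4)
    (hr : r ≤ 1 / 4) :
    ENNReal.ofReal (r / ε) * ν (ball z (ε - r)) ≤ (ν.prod unifIcc) (noisyHitSet ε z r) := by
  rw [prod_noisyHitSet, ← lintegral_indicator_const measurableSet_ball]
  refine lintegral_mono fun x => ?_
  by_cases hx : x ∈ ball z (ε - r)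
  · rw [indicator_of_mem hx, unifIcc_dist_lt_of_dist_lt hε0 hε hr hx]
  · rw [indicator_of_notMem hx]; exact zero_le

theorem prod_noisyHitSet_le_ofReal_mul_measure_closedBall (hε0 : 0 < ε) (hε : ε ≤ 1 / 4)
    (hr : r ≤ 1 / 4) :
    (ν.prod unifIcc) (noisyHitSet ε z r) ≤ ENNReal.ofReal (r / ε) * ν (closedBall z (ε + r)) := by
  rw [prod_noisyHitSet, ← lintegral_indicator_const measurableSet_closedBall]
  refine lintegral_mono fun x => ?_
  by_cases hx : x ∈ closedBall z (ε + r)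
  · rw [indicator_of_mem hx]; exact unifIcc_dist_lt_le hε0 hε hr
  · rw [indicator_of_notMem hx, unifIcc_dist_lt_of_lt_dist hε0 hε hr (not_le.mp hx)]

theorem tendsto_div_mul_prod_noisyHitSet [IsFiniteMeasure ν] (hε0 : 0 < ε) (hε : ε ≤ 1 / 4)
    (hsphere : ν (sphere z ε) = 0) :
    Tendsto (fun r => ε / r * ((ν.prod unifIcc) (noisyHitSet ε z r)).toReal) (𝓝[>] 0)
      (𝓝 (ν (ball z ε)).toReal) := by
  have hclosed : ν (closedBall z ε) = ν (ball z ε) := by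
    rw [← ball_union_sphere]
    exact measure_congr (union_ae_eq_left_of_ae_eq_empty (ae_eq_empty.mpr hsphere))
  have hsub : Tendsto (fun r => ε - r) (𝓝[>] 0) (𝓝[<] ε) := by
    refine tendsto_nhdsWithin_iff.mpr ⟨?_, eventually_nhdsWithin_of_forall fun r hr => ?_⟩
    · simpa using ((continuous_sub_left ε).tendsto 0).mono_left nhdsWithin_le_nhds
    · exact sub_lt_self ε hr
  have hadd : Tendsto (fun r => ε + r) (𝓝[>] 0) (𝓝[>] ε) := by
    refine tendsto_nhdsWithin_iff.mpr ⟨?_, eventually_nhdsWithin_of_forall fun r hr => ?_⟩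
    · simpa using ((continuous_const_add ε).tendsto 0).mono_left nhdsWithin_le_nhds
    · exact lt_add_of_pos_right ε hr
  have hlower := (ENNReal.tendsto_toReal (measure_ne_top ν _)).comp
    ((tendsto_measure_ball_nhdsLT ν z ε).comp hsub)
  have hupper := (ENNReal.tendsto_toReal (measure_ne_top ν _)).comp
    ((tendsto_measure_closedBall_nhdsGT ν z ε).comp hadd)
  rw [hclosed] at hupper
  refine tendsto_of_tendsto_of_tendsto_of_le_of_le' hlower hupper ?_ ?_
  · filter_upwards [Ioc_mem_nhdsGT (by norm_num : (0 : ℝ) < 1 / 4)] with r ⟨hr0, hr⟩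
    have h := ENNReal.toReal_mono (measure_ne_top _ _)
      (ofReal_mul_measure_ball_le_prod_noisyHitSet ν (z := z) hε0 hε hr)
    rw [ENNReal.toReal_mul, ENNReal.toReal_ofReal (by positivity)] at h
    calc (ν (ball z (ε - r))).toReal = ε / r * (r / ε * (ν (ball z (ε - r))).toReal) := by
          field_simp
      _ ≤ _ := by gcongr
  · filter_upwards [Ioc_mem_nhdsGT (by norm_num : (0 : ℝ) < 1 / 4)] with r ⟨hr0, hr⟩
    have h := ENNReal.toReal_mono (ENNReal.mul_ne_top ENNReal.ofReal_ne_top (measure_ne_top _ _))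
      (prod_noisyHitSet_le_ofReal_mul_measure_closedBall ν (z := z) hε0 hε hr)
    rw [ENNReal.toReal_mul, ENNReal.toReal_ofReal (by positivity)] at h
    calc _ ≤ ε / r * (r / ε * (ν (closedBall z (ε + r))).toReal) := by gcongr
      _ = (ν (closedBall z (ε + r))).toReal := by field_simp

end NoisyHitProbability

/-- On the circle, with `θ` uniform on `[-1,1]`, `ε ∈ (0, 1/4]`,
`ν(B(z,ε)) > 0` and `ν{dist(·,z) = ε} = 0`, setting `b_m = log(m ν(B(z,ε))/ε)` and
`u_m = u + b_m`, one has `m · ℙ(X_0 > u_m) = m·(ν⊗θ){dist(x+εξ, z) < e^{−u_m}} → e^{−u}`. -/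
theorem statement_5 (ν : Measure (AddCircle (1 : ℝ))) [IsProbabilityMeasure ν]
    (z : AddCircle (1 : ℝ)) (ε : ℝ) (hε0 : 0 < ε) (hε : ε ≤ 1 / 4)
    (hpos : 0 < ν (Metric.ball z ε))
    (hbd : ν {x | dist x z = ε} = 0)
    (u : ℝ) :
    Tendsto (fun m : ℕ =>
        (m : ℝ) * ((ν.prod unifIcc) {p : AddCircle (1 : ℝ) × ℝ |
          dist (p.1 + ((ε * p.2 : ℝ) : AddCircle (1 : ℝ))) z <
            Real.exp (-(u + Real.log ((m : ℝ) * (ν (Metric.ball z ε)).toReal / ε)))}).toReal)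
      atTop (𝓝 (Real.exp (-u))) := by
  set μ := (ν (ball z ε)).toReal
  have hμ : 0 < μ := ENNReal.toReal_pos hpos.ne' (measure_ne_top ν _)
  set r : ℕ → ℝ := fun m => Real.exp (-(u + Real.log ((m : ℝ) * μ / ε)))
  have hr : Tendsto r atTop (𝓝[>] 0) := by
    refine tendsto_nhdsWithin_iff.mpr ⟨?_, .of_forall fun m => Real.exp_pos _⟩
    have hlog : Tendsto (fun m : ℕ => Real.log ((m : ℝ) * μ / ε)) atTop atTop :=
      Real.tendsto_log_atTop.comp
        ((tendsto_natCast_atTop_atTop.atTop_mul_const hμ).atTop_div_const hε0)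
    exact Real.tendsto_exp_atBot.comp
      (tendsto_neg_atTop_atBot.comp (tendsto_atTop_add_const_left _ u hlog))
  have hrescale : ∀ᶠ m : ℕ in atTop, Real.exp (-u) / μ * (ε / r m) = m := by
    filter_upwards [eventually_ge_atTop 1] with m hm1
    have hm : (0 : ℝ) < m := by exact_mod_cast hm1
    simp only [r, neg_add, Real.exp_add, Real.exp_neg (Real.log _),
      Real.exp_log (show 0 < (m : ℝ) * μ / ε by positivity)]
    field_simp
  have h := ((tendsto_div_mul_prod_noisyHitSet ν hε0 hε hbd).comp hr).const_mul (Real.exp (-u) / μ)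
  rw [div_mul_cancel₀ _ hμ.ne'] at h
  refine h.congr' (hrescale.mono fun m hm => ?_)
  simp only [Function.comp_apply, ← mul_assoc, hm]
  rfl
end
end

section
/- Let θ be the uniform probability measure on [−1, 1], let z, x ∈ 𝕋 = ℝ/ℤ, let ε ∈ (0, 1/4] with dist(x, z) ≠ ε, let c > 0, and let (r_m) be a sequence of positive reals with m · r_m → c. Then m · θ{ξ ∈ [−1, 1] : dist(x + εξ, z) < r_m} → (c/ε) · 1_{B(z,ε)}(x) as m → ∞, i.e. the limit equals c/ε if dist(x, z) < ε and equals 0 if dist(x, z) > ε. -/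
open MeasureTheory Metric Set Filter Topology

noncomputable section

lemma r_tendsto_zero {c : ℝ} {r : ℕ → ℝ}
    (hrc : Tendsto (fun m : ℕ => (m : ℝ) * r m) atTop (𝓝 c)) :
    Tendsto r atTop (𝓝 0) := by
  have h0 : Tendsto (fun m : ℕ => ((m : ℝ) * r m) * (1 / (m : ℝ))) atTop (𝓝 (c * 0)) :=
    hrc.mul tendsto_one_div_atTop_nhds_zero_nat
  rw [mul_zero] at h0
  refine h0.congr' ?_
  filter_upwards [eventually_ge_atTop 1] with m hm
  have hm0 : (m : ℝ) ≠ 0 := Nat.cast_ne_zero.mpr (by omega)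
  field_simp

/-- With `θ` uniform on `[-1,1]`, `ε ∈ (0, 1/4]`, `dist(x,z) ≠ ε`,
`c > 0` and `m·r_m → c`, one has
`m · θ{ξ : dist(x+εξ, z) < r_m} → (c/ε)·1_{B(z,ε)}(x)`. -/
theorem statement_7 (z x : AddCircle (1 : ℝ)) (ε : ℝ) (hε0 : 0 < ε) (hε : ε ≤ 1 / 4)
    (hxz : dist x z ≠ ε) (c : ℝ) (hc : 0 < c)
    (r : ℕ → ℝ) (hr : ∀ m, 0 < r m)
    (hrc : Tendsto (fun m : ℕ => (m : ℝ) * r m) atTop (𝓝 c)) :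
    Tendsto (fun m : ℕ =>
        (m : ℝ) * (unifIcc {ξ : ℝ |
          dist (x + ((ε * ξ : ℝ) : AddCircle (1 : ℝ))) z < r m}).toReal)
      atTop (𝓝 ((Metric.ball z ε).indicator (fun _ => c / ε) x)) := by
  have hr0 : Tendsto r atTop (𝓝 0) := r_tendsto_zero hrc
  -- choose a good representative of `x - z`
  obtain ⟨v, hv⟩ : ∃ v : ℝ, (v : AddCircle (1 : ℝ)) = x - z :=
    QuotientAddGroup.mk_surjective (x - z)
  set u : ℝ := v - round v with hu_def
  have hcoe_u : ((u : ℝ) : AddCircle (1 : ℝ)) = x - z := by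
    have h0 : (((round v : ℝ)) : AddCircle (1 : ℝ)) = 0 := by
      rw [AddCircle.coe_eq_zero_iff]; exact ⟨round v, by simp⟩
    rw [hu_def, QuotientAddGroup.mk_sub, h0, sub_zero, hv]
  have hd : dist x z = |u| := by
    rw [dist_eq_norm, ← hcoe_u, AddCircle.norm_coe_eq_abs_iff (p := (1:ℝ)) (by norm_num)]
    simpa using abs_sub_round v
  -- general distance formula on the relevant range
  have hdist_eq : ∀ ξ : ℝ, |u + ε * ξ| ≤ 1 / 2 →
      dist (x + ((ε * ξ : ℝ) : AddCircle (1 : ℝ))) z = |u + ε * ξ| := by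
    intro ξ hξ
    have : x + ((ε * ξ : ℝ) : AddCircle (1 : ℝ)) - z = ((u + ε * ξ : ℝ) : AddCircle (1 : ℝ)) := by
      rw [QuotientAddGroup.mk_add, hcoe_u]; abel
    rw [dist_eq_norm, this,
      AddCircle.norm_coe_eq_abs_iff (p := (1:ℝ)) (by norm_num)]
    simpa using hξ
  rcases lt_or_gt_of_ne hxz with hlt | hgt
  · -- near case: dist x z < ε, indicator = c/ε
    have hxball : x ∈ Metric.ball z ε := mem_ball.mpr hlt
    rw [Set.indicator_of_mem hxball]
    have habs_u : |u| < ε := hd ▸ hlt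
    -- eventually r m < ε - |u|
    have hev : ∀ᶠ m in atTop, r m < ε - |u| :=
      hr0.eventually_lt_const (by linarith)
    have key : Tendsto (fun m : ℕ => (m : ℝ) * (r m / ε)) atTop (𝓝 (c / ε)) := by
      have := hrc.div_const ε
      refine this.congr fun m => ?_
      ring
    refine key.congr' ?_
    filter_upwards [hev] with m hm
    congr 1
    -- compute the measure
    have hset : {ξ : ℝ | dist (x + ((ε * ξ : ℝ) : AddCircle (1 : ℝ))) z < r m}
        ∩ Set.Icc (-1 : ℝ) 1 = Set.Ioo ((-u - r m) / ε) ((-u + r m) / ε) := by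
      ext ξ
      constructor
      · rintro ⟨h1, h2⟩
        have hξ1 : |ξ| ≤ 1 := abs_le.mpr ⟨h2.1, h2.2⟩
        have hsmall : |u + ε * ξ| ≤ 1 / 2 := by
          have : |ε * ξ| ≤ ε := by
            rw [abs_mul, abs_of_pos hε0]
            nlinarith
          calc |u + ε * ξ| ≤ |u| + |ε * ξ| := abs_add_le _ _
            _ ≤ 1 / 2 := by linarith
        rw [Set.mem_setOf_eq, hdist_eq ξ hsmall] at h1
        rw [abs_lt] at h1
        constructor
        · rw [div_lt_iff₀ hε0]; linarith [h1.1]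
        · rw [lt_div_iff₀ hε0]; linarith [h1.2]
      · intro hξ
        obtain ⟨h1, h2⟩ := hξ
        rw [div_lt_iff₀ hε0] at h1
        rw [lt_div_iff₀ hε0] at h2
        have habs : |u + ε * ξ| < r m := abs_lt.mpr ⟨by linarith, by linarith⟩
        have hsmall : |u + ε * ξ| ≤ 1 / 2 :=
          le_of_lt (lt_of_lt_of_le habs (by linarith [abs_nonneg u]))
        have hmem : ξ ∈ Set.Icc (-1 : ℝ) 1 := by
          constructor
          · nlinarith [le_abs_self u, neg_abs_le u, hε0]
          · nlinarith [le_abs_self u, neg_abs_le u, hε0]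
        exact ⟨by rw [Set.mem_setOf_eq, hdist_eq ξ hsmall]; exact habs, hmem⟩
    rw [unifIcc, Measure.smul_apply, smul_eq_mul,
      Measure.restrict_apply' measurableSet_Icc, hset, Real.volume_Ioo]
    have hlen : (-u + r m) / ε - (-u - r m) / ε = 2 * (r m / ε) := by
      field_simp; ring
    rw [hlen, ENNReal.toReal_mul, ENNReal.toReal_ofReal
      (mul_nonneg (by norm_num) (div_nonneg (hr m).le hε0.le))]
    simp [ENNReal.toReal_inv]
  · -- far case: dist x z > ε, indicator = 0
    have hxball : x ∉ Metric.ball z ε := by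
      rw [mem_ball]; linarith
    rw [Set.indicator_of_notMem hxball]
    have hev : ∀ᶠ m in atTop, r m < dist x z - ε :=
      hr0.eventually_lt_const (by linarith)
    refine (tendsto_const_nhds (x := (0:ℝ))).congr' ?_
    filter_upwards [hev] with m hm
    have hset : {ξ : ℝ | dist (x + ((ε * ξ : ℝ) : AddCircle (1 : ℝ))) z < r m}
        ∩ Set.Icc (-1 : ℝ) 1 = ∅ := by
      ext ξ
      simp only [Set.mem_inter_iff, Set.mem_setOf_eq, Set.mem_Icc, Set.mem_empty_iff_false,
        iff_false, not_and, and_imp]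
      intro h1 h2 h3
      have hξ1 : |ξ| ≤ 1 := abs_le.mpr ⟨h2, h3⟩
      have habs2 : |ε * ξ| ≤ ε := by
        rw [abs_mul, abs_of_pos hε0]; nlinarith
      have hnormeq : ‖((ε * ξ : ℝ) : AddCircle (1 : ℝ))‖ = |ε * ξ| := by
        rw [AddCircle.norm_coe_eq_abs_iff (p := (1:ℝ)) (by norm_num)]
        simp only [abs_one]; linarith
      have hnorm : ‖((ε * ξ : ℝ) : AddCircle (1 : ℝ))‖ ≤ ε := hnormeq ▸ habs2
      have htri : dist x z ≤ ‖((ε * ξ : ℝ) : AddCircle (1 : ℝ))‖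
          + dist (x + ((ε * ξ : ℝ) : AddCircle (1 : ℝ))) z := by
        calc dist x z ≤ dist x (x + ((ε * ξ : ℝ) : AddCircle (1 : ℝ)))
              + dist (x + ((ε * ξ : ℝ) : AddCircle (1 : ℝ))) z := dist_triangle _ _ _
          _ = ‖((ε * ξ : ℝ) : AddCircle (1 : ℝ))‖
              + dist (x + ((ε * ξ : ℝ) : AddCircle (1 : ℝ))) z := by
            rw [dist_eq_norm]; congr 1; rw [← norm_neg]; congr 1; abel
      linarith
    symm
    rw [unifIcc, Measure.smul_apply, smul_eq_mul,
      Measure.restrict_apply' measurableSet_Icc, hset]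
    simp
end
end

section
/- Let ν be a Borel probability measure on 𝕋 = ℝ/ℤ, z ∈ 𝕋, and ε ∈ (0, 1/4] with ν(B(z, ε)) > 0 and ν{x : dist(x, z) = ε} = 0. Assume the process satisfies an extreme value law in the following sense: for every τ > 0 and every sequence of reals (v_m) such that m · ℙ(X_0 > v_m) → τ, one has ℙ(M_m ≤ v_m) → e^{−τ}. Then, with b_m = log(m · ν(B(z, ε)) / ε), for every u ∈ ℝ one has ℙ(M_m ≤ u + b_m) → exp(−e^{−u}) as m → ∞ (the Gumbel law, with scale sequence a_m = 1 and location sequence b_m). -/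
open MeasureTheory Metric Set Filter Topology

noncomputable section

/-!
For `0 ≤ v` the event `X₀ > v` says that the perturbed point `x + εξ₀` lies in the punctured
ball `B(z, e^{-v}) \ {z}`. Since `ε < 1/2`, the point `x + εξ₀` is uniformly distributed on the
arc `B̄(x, ε)` with density `1/(2ε)`, so the probability `P(r)` (`hitProb`) of hitting `B(z, r) \ {z}` satisfies
`(r/ε) ν(B(z, ε - r)) ≤ P(r) ≤ (r/ε) ν(B̄(z, ε + r))`. As `ν` does not charge the sphere of
radius `ε`, this gives `P(r) ~ r ν(B(z, ε)) / ε` as `r → 0⁺`. The threshold `u + b_m` corresponds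
to `r = e^{-u} ε / (m ν(B(z, ε)))`, so `m ℙ(X₀ > u + b_m) → e^{-u}`, and the extreme value law
yields the Gumbel limit.
-/

local notation "𝕋" => AddCircle (1 : ℝ)

theorem tendsto_measure_ball_nhdsLT_s8 {α : Type*} [PseudoMetricSpace α] [MeasurableSpace α]
    (μ : Measure α) (x : α) (r : ℝ) :
    Tendsto (fun ρ => μ (ball x ρ)) (𝓝[<] r) (𝓝 (μ (ball x r))) := by
  have : (atTop : Filter (Iio r)).IsCountablyGenerated := by
    rw [← comap_coe_Iio_nhdsLT r]; infer_instance
  rw [← map_coe_Iio_atTop r, tendsto_map'_iff, ← biUnion_lt_ball x r,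
    ← iUnion_subtype (· < r) fun ρ => ball x ↑ρ]
  exact tendsto_measure_iUnion_atTop fun ρ ρ' h => ball_subset_ball h

theorem tendsto_measure_closedBall_nhdsGT_s8 {α : Type*} [PseudoMetricSpace α] [MeasurableSpace α]
    [OpensMeasurableSpace α] (μ : Measure α) [IsFiniteMeasure μ] (x : α) (r : ℝ) :
    Tendsto (fun ρ => μ (closedBall x ρ)) (𝓝[>] r) (𝓝 (μ (closedBall x r))) := by
  rw [← biInter_gt_closedBall x r]
  exact tendsto_measure_biInter_gt (fun _ _ => measurableSet_closedBall.nullMeasurableSet)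
    (fun _ _ _ h => closedBall_subset_closedBall h) ⟨r + 1, by linarith, measure_ne_top _ _⟩

/-- `hv` excludes the junk value `-log 0 = 0`, which would put `y = z` on the left. -/
theorem lt_neg_log_dist_iff {α : Type*} [MetricSpace α] {v : ℝ} (hv : 0 ≤ v) (y z : α) :
    v < -Real.log (dist y z) ↔ y ∈ ball z (Real.exp (-v)) \ {z} := by
  rw [Set.mem_sdiff, mem_ball, mem_singleton_iff, ← ne_eq, ← dist_pos]
  rcases (dist_nonneg (x := y) (y := z)).eq_or_lt with h | h
  · simp [← h, hv]
  · rw [lt_neg, ← Real.log_exp (-v), Real.log_lt_log_iff h (Real.exp_pos _)]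
    simp [h]

theorem AddCircle.norm_coe_one_eq_abs {s : ℝ} (hs : |s| ≤ 1 / 2) : ‖(s : 𝕋)‖ = |s| :=
  (AddCircle.norm_coe_eq_abs_iff 1 one_ne_zero).mpr (by simpa using hs)

theorem AddCircle.volume_ball_one {r : ℝ} (hr : r ≤ 1 / 2) (x : 𝕋) :
    volume (ball x r) = ENNReal.ofReal (2 * r) := by
  have hlim : Tendsto (fun ρ => ENNReal.ofReal (2 * ρ)) (𝓝[<] r) (𝓝 (ENNReal.ofReal (2 * r))) :=
    ((ENNReal.continuous_ofReal.comp (continuous_const_mul 2)).tendsto r).mono_left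
      nhdsWithin_le_nhds
  refine le_antisymm ?_ (le_of_tendsto hlim ?_)
  · calc volume (ball x r) ≤ volume (closedBall x r) := measure_mono ball_subset_closedBall
      _ ≤ ENNReal.ofReal (2 * r) := by
        rw [AddCircle.volume_closedBall]; exact ENNReal.ofReal_le_ofReal (min_le_right _ _)
  · filter_upwards [self_mem_nhdsWithin] with ρ (hρ : ρ < r)
    calc ENNReal.ofReal (2 * ρ) = volume (closedBall x ρ) := by
          rw [AddCircle.volume_closedBall, min_eq_right (by linarith)]
      _ ≤ volume (ball x r) := measure_mono (closedBall_subset_ball hρ)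

instance inst_s8 : IsProbabilityMeasure unifIcc := by
  constructor
  rw [unifIcc, Measure.smul_apply, Measure.restrict_apply MeasurableSet.univ,
    Set.univ_inter, Real.volume_Icc, smul_eq_mul]
  norm_num
  exact ENNReal.inv_mul_cancel (by norm_num) (by norm_num)

theorem map_unifIcc_add_mul (x : 𝕋) {ε : ℝ} (hε0 : 0 < ε) (hε : ε < 1 / 2) :
    unifIcc.map (fun t : ℝ => x + ((ε * t : ℝ) : 𝕋)) =
      ENNReal.ofReal (2 * ε)⁻¹ • volume.restrict (closedBall x ε) := by
  ext V hV
  rw [Measure.map_apply (by fun_prop) hV, unifIcc, Measure.smul_apply, Measure.smul_apply,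
    Measure.restrict_apply' measurableSet_Icc, Measure.restrict_apply hV, smul_eq_mul, smul_eq_mul]
  have hscale : (fun t : ℝ => x + ((ε * t : ℝ) : 𝕋)) ⁻¹' V ∩ Icc (-1) 1 =
      (fun t => ε * t) ⁻¹' ((fun s : ℝ => x + (s : 𝕋)) ⁻¹' V ∩ Icc (-ε) ε) := by
    ext t
    simp only [mem_inter_iff, mem_preimage, mem_Icc, ← abs_le, abs_mul, abs_of_pos hε0]
    rw [mul_le_iff_le_one_right hε0]
  -- `Ioc (-1/2) (1/2)` is a fundamental domain of `ℝ → 𝕋`, on which `‖(s : 𝕋)‖ = |s|`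
  have harc : (fun s : ℝ => x + (s : 𝕋)) ⁻¹' V ∩ Icc (-ε) ε =
      QuotientAddGroup.mk ⁻¹' ((fun y => x + y) ⁻¹' (V ∩ closedBall x ε)) ∩
        Ioc (-(1 / 2)) (-(1 / 2) + 1) := by
    ext s
    simp only [mem_inter_iff, mem_preimage, mem_closedBall, dist_self_add_left, mem_Icc, mem_Ioc]
    constructor
    · rintro ⟨hxV, hs⟩
      have hs' : |s| ≤ 1 / 2 := abs_le.mpr ⟨by linarith, by linarith⟩
      refine ⟨⟨hxV, ?_⟩, by linarith, by linarith⟩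
      rwa [AddCircle.norm_coe_one_eq_abs hs', abs_le]
    · rintro ⟨⟨hxV, hs⟩, h1, h2⟩
      rw [AddCircle.norm_coe_one_eq_abs (abs_le.mpr ⟨by linarith, by linarith⟩), abs_le] at hs
      exact ⟨hxV, hs⟩
  rw [hscale, Real.volume_preimage_mul_left hε0.ne', harc,
    ← AddCircle.add_projection_respects_measure 1 _
      ((hV.inter measurableSet_closedBall).preimage (measurable_const_add x)),
    measure_preimage_add, ← mul_assoc, abs_of_pos (inv_pos.mpr hε0), ← ENNReal.ofReal_ofNat 2,
    ← ENNReal.ofReal_inv_of_pos two_pos, ← ENNReal.ofReal_mul (by norm_num), mul_inv]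

theorem measurableSet_add_mul_mem (ε : ℝ) {V : Set 𝕋} (hV : MeasurableSet V) :
    MeasurableSet {q : 𝕋 × ℝ | q.1 + ((ε * q.2 : ℝ) : 𝕋) ∈ V} :=
  hV.preimage (by fun_prop)

theorem prod_unifIcc_add_mul_mem (ν : Measure 𝕋) [SFinite ν] {ε : ℝ} (hε0 : 0 < ε)
    (hε : ε < 1 / 2) {V : Set 𝕋} (hV : MeasurableSet V) :
    (ν.prod unifIcc) {q | q.1 + ((ε * q.2 : ℝ) : 𝕋) ∈ V} =
      ∫⁻ x, ENNReal.ofReal (2 * ε)⁻¹ * volume (V ∩ closedBall x ε) ∂ν := by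
  rw [Measure.prod_apply (measurableSet_add_mul_mem ε hV)]
  refine lintegral_congr fun x => ?_
  have h := congrArg (· V) (map_unifIcc_add_mul x hε0 hε)
  simp only [Measure.map_apply (by fun_prop : Measurable fun t : ℝ => x + ((ε * t : ℝ) : 𝕋)) hV,
    Measure.smul_apply, Measure.restrict_apply hV, smul_eq_mul] at h
  exact h

theorem volume_ball_sdiff_singleton_inter_closedBall_le {r : ℝ} (hr : r ≤ 1 / 2) (z x : 𝕋)
    (ε : ℝ) :
    volume ((ball z r \ {z}) ∩ closedBall x ε) ≤
      (closedBall z (ε + r)).indicator (fun _ => ENNReal.ofReal (2 * r)) x := by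
  by_cases hx : x ∈ closedBall z (ε + r)
  · rw [indicator_of_mem hx, ← AddCircle.volume_ball_one hr z]
    exact measure_mono (inter_subset_left.trans sdiff_subset)
  · suffices (ball z r \ {z}) ∩ closedBall x ε = ∅ by simp [this]
    refine eq_empty_of_forall_notMem fun y ⟨⟨hyz, _⟩, hyx⟩ => hx ?_
    rw [mem_ball] at hyz
    rw [mem_closedBall] at hyx ⊢
    linarith [dist_triangle_left x z y]

theorem volume_ball_sdiff_singleton_inter_closedBall {r : ℝ} (hr : r ≤ 1 / 2) {z x : 𝕋}
    {ε : ℝ} (hx : x ∈ ball z (ε - r)) :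
    volume ((ball z r \ {z}) ∩ closedBall x ε) = ENNReal.ofReal (2 * r) := by
  have hsub : ball z r ⊆ closedBall x ε := fun y hy => by
    rw [mem_ball] at hx hy
    rw [mem_closedBall]
    linarith [dist_triangle_right y x z]
  have hz : volume ({z} : Set 𝕋) = 0 := by
    simpa using AddCircle.volume_closedBall (T := 1) (x := z) 0
  rw [inter_eq_left.mpr (sdiff_subset.trans hsub), measure_sdiff_null hz,
    AddCircle.volume_ball_one hr]

theorem ofReal_inv_two_mul_mul_ofReal_two_mul {ε : ℝ} (hε0 : 0 < ε) (r : ℝ) :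
    ENNReal.ofReal (2 * ε)⁻¹ * ENNReal.ofReal (2 * r) = ENNReal.ofReal (r / ε) := by
  rw [← ENNReal.ofReal_mul (by positivity)]
  congr 1
  field_simp

def hitProb (ν : Measure 𝕋) (ε : ℝ) (z : 𝕋) (r : ℝ) : ENNReal :=
  (ν.prod unifIcc) {q | q.1 + ((ε * q.2 : ℝ) : 𝕋) ∈ ball z r \ {z}}

theorem hitProb_le (ν : Measure 𝕋) [SFinite ν] {ε r : ℝ} (hε0 : 0 < ε) (hε : ε < 1 / 2)
    (hr : r ≤ 1 / 2) (z : 𝕋) :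
    hitProb ν ε z r ≤ ENNReal.ofReal (r / ε) * ν (closedBall z (ε + r)) := by
  rw [hitProb,
    prod_unifIcc_add_mul_mem ν hε0 hε (measurableSet_ball.diff (measurableSet_singleton z)),
    ← ofReal_inv_two_mul_mul_ofReal_two_mul hε0, mul_assoc,
    ← lintegral_indicator_const measurableSet_closedBall, ← lintegral_const_mul' _ _ (by simp)]
  exact lintegral_mono fun x => mul_le_mul_right
    (volume_ball_sdiff_singleton_inter_closedBall_le hr z x ε) _

theorem le_hitProb (ν : Measure 𝕋) [SFinite ν] {ε r : ℝ} (hε0 : 0 < ε) (hε : ε < 1 / 2)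
    (hr : r ≤ 1 / 2) (z : 𝕋) :
    ENNReal.ofReal (r / ε) * ν (ball z (ε - r)) ≤ hitProb ν ε z r := by
  rw [hitProb,
    prod_unifIcc_add_mul_mem ν hε0 hε (measurableSet_ball.diff (measurableSet_singleton z)),
    ← ofReal_inv_two_mul_mul_ofReal_two_mul hε0, mul_assoc,
    ← lintegral_indicator_const measurableSet_ball, ← lintegral_const_mul' _ _ (by simp)]
  refine lintegral_mono fun x => mul_le_mul_right ?_ _
  by_cases hx : x ∈ ball z (ε - r)
  · rw [indicator_of_mem hx, volume_ball_sdiff_singleton_inter_closedBall hr hx]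
  · simp [indicator_of_notMem hx]

theorem tendsto_hitProb_div (ν : Measure 𝕋) [IsProbabilityMeasure ν] {ε : ℝ} (hε0 : 0 < ε)
    (hε : ε < 1 / 2) (z : 𝕋) (hbd : ν {x | dist x z = ε} = 0) :
    Tendsto (fun r => (hitProb ν ε z r).toReal / r) (𝓝[>] 0)
      (𝓝 ((ν (ball z ε)).toReal / ε)) := by
  have hsphere : ν (closedBall z ε) = ν (ball z ε) := by
    rw [← measure_sdiff_null hbd]
    congr 1
    ext x
    simp [lt_iff_le_and_ne]
  have hsub : Tendsto (fun r => ε - r) (𝓝[>] 0) (𝓝[<] ε) := by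
    refine tendsto_nhdsWithin_iff.mpr ⟨?_, eventually_nhdsWithin_of_forall fun r hr => ?_⟩
    · simpa using ((continuous_sub_left ε).tendsto 0).mono_left nhdsWithin_le_nhds
    · simpa using hr
  have hadd : Tendsto (fun r => ε + r) (𝓝[>] 0) (𝓝[>] ε) := by
    refine tendsto_nhdsWithin_iff.mpr ⟨?_, eventually_nhdsWithin_of_forall fun r hr => ?_⟩
    · simpa using ((continuous_const_add ε).tendsto 0).mono_left nhdsWithin_le_nhds
    · simpa using hr
  have hlow := ((ENNReal.tendsto_toReal (measure_ne_top ν _)).comp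
    ((tendsto_measure_ball_nhdsLT_s8 ν z ε).comp hsub)).div_const ε
  have hup := ((ENNReal.tendsto_toReal (measure_ne_top ν _)).comp
    ((tendsto_measure_closedBall_nhdsGT_s8 ν z ε).comp hadd)).div_const ε
  rw [hsphere] at hup
  refine tendsto_of_tendsto_of_tendsto_of_le_of_le' hlow hup ?_ ?_ <;>
    filter_upwards [Ioo_mem_nhdsGT (by norm_num : (0:ℝ) < 1 / 2)] with r ⟨hr0, hr⟩
  · have h := ENNReal.toReal_mono (measure_ne_top (ν.prod unifIcc) _) (le_hitProb ν hε0 hε hr.le z)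
    rw [ENNReal.toReal_mul, ENNReal.toReal_ofReal (by positivity)] at h
    rw [le_div_iff₀ hr0]
    calc _ = r / ε * (ν (ball z (ε - r))).toReal := by simp only [Function.comp_apply]; ring
      _ ≤ _ := h
  · have h := ENNReal.toReal_mono (by finiteness) (hitProb_le ν hε0 hε hr.le z)
    rw [ENNReal.toReal_mul, ENNReal.toReal_ofReal (by positivity)] at h
    rw [div_le_iff₀ hr0]
    calc _ ≤ r / ε * (ν (closedBall z (ε + r))).toReal := h
      _ = _ := by simp only [Function.comp_apply]; ring

theorem IsIIDProduct1.map_eval {θ : Measure ℝ} [IsProbabilityMeasure θ] {Θ : Measure (ℕ → ℝ)}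
    (h : IsIIDProduct1 θ Θ) (i : ℕ) : Θ.map (fun ξ => ξ i) = θ := by
  have hfac : (fun ξ : ℕ → ℝ => ξ i) =
      (fun f : Fin (i + 1) → ℝ => f (Fin.last i)) ∘ fun ξ (j : Fin (i + 1)) => ξ j := rfl
  rw [hfac, ← Measure.map_map (measurable_pi_apply _) (by fun_prop), h (i + 1)]
  simp [Measure.pi_map_eval]

theorem prod_lt_X1_zero (T : 𝕋 → 𝕋) (ν : Measure 𝕋) [SFinite ν] {Θ : Measure (ℕ → ℝ)}
    [SFinite Θ] (hΘ : IsIIDProduct1 unifIcc Θ) (z : 𝕋) (ε : ℝ) {v : ℝ} (hv : 0 ≤ v) :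
    (ν.prod Θ) {p | v < X1 T z ε 0 p} = hitProb ν ε z (Real.exp (-v)) := by
  have hmarg := Measure.map_prod_map ν Θ measurable_id (measurable_pi_apply 0)
  rw [Measure.map_id, hΘ.map_eval 0] at hmarg
  rw [hitProb, hmarg, Measure.map_apply (by fun_prop)
    (measurableSet_add_mul_mem ε (measurableSet_ball.diff (measurableSet_singleton z)))]
  congr 1
  ext p
  simp [X1, lt_neg_log_dist_iff hv]

theorem tendsto_mul_prod_lt_X1_zero (T : 𝕋 → 𝕋) (ν : Measure 𝕋) [IsProbabilityMeasure ν]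
    {Θ : Measure (ℕ → ℝ)} [SFinite Θ] (hΘ : IsIIDProduct1 unifIcc Θ) (z : 𝕋) {ε : ℝ}
    (hε0 : 0 < ε) (hε : ε < 1 / 2) (hpos : 0 < ν (ball z ε)) (hbd : ν {x | dist x z = ε} = 0)
    (u : ℝ) :
    Tendsto (fun m : ℕ => (m : ℝ) * ((ν.prod Θ)
        {p | u + Real.log (m * (ν (ball z ε)).toReal / ε) < X1 T z ε 0 p}).toReal)
      atTop (𝓝 (Real.exp (-u))) := by
  set B := (ν (ball z ε)).toReal
  have hB : 0 < B := ENNReal.toReal_pos hpos.ne' (measure_ne_top ν _)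
  set c := Real.exp (-u) * ε / B
  have hc : 0 < c := by positivity
  have hcB : B * c = Real.exp (-u) * ε := mul_div_cancel₀ _ hB.ne'
  have hradius : ∀ m : ℕ, 0 < m → Real.exp (-(u + Real.log (m * B / ε))) = c / m := by
    intro m hm
    rw [neg_add, Real.exp_add, Real.exp_neg (Real.log _), Real.exp_log (by positivity)]
    field_simp
    exact hcB.symm
  have hv : ∀ᶠ m : ℕ in atTop, 0 ≤ u + Real.log (m * B / ε) := by
    simp_rw [mul_div_assoc]
    filter_upwards [(Real.tendsto_log_atTop.comp (tendsto_natCast_atTop_atTop.atTop_mul_const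
      (div_pos hB hε0))).eventually_ge_atTop (-u)] with m hm
    simp only [Function.comp_apply] at hm
    linarith
  have hr : Tendsto (fun m : ℕ => c / m) atTop (𝓝[>] 0) :=
    tendsto_nhdsWithin_iff.mpr ⟨tendsto_const_div_atTop_nhds_zero_nat c,
      (eventually_gt_atTop 0).mono fun m hm => div_pos hc (Nat.cast_pos.mpr hm)⟩
  have hhit := ((tendsto_hitProb_div ν hε0 hε z hbd).comp hr).const_mul c
  rw [show Real.exp (-u) = c * (B / ε) by
    rw [← mul_div_assoc, mul_comm c, hcB, mul_div_cancel_right₀ _ hε0.ne']]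
  refine hhit.congr' ?_
  filter_upwards [eventually_gt_atTop 0, hv] with m hm hvm
  rw [Function.comp_apply, prod_lt_X1_zero T ν hΘ z ε hvm, hradius m hm]
  field_simp

theorem statement_8_general (T : AddCircle (1 : ℝ) → AddCircle (1 : ℝ))
    (ν : Measure (AddCircle (1 : ℝ))) [IsProbabilityMeasure ν]
    (Θ : Measure (ℕ → ℝ)) [IsProbabilityMeasure Θ]
    (hΘ : IsIIDProduct1 unifIcc Θ)
    (z : AddCircle (1 : ℝ)) (ε : ℝ) (hε0 : 0 < ε) (hε : ε ≤ 1 / 4)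
    (hpos : 0 < ν (Metric.ball z ε))
    (hbd : ν {x | dist x z = ε} = 0)
    (hEVL : ∀ τ : ℝ, 0 < τ → ∀ v : ℕ → ℝ,
      Tendsto (fun m : ℕ =>
          (m : ℝ) * ((ν.prod Θ) {p | v m < X1 T z ε 0 p}).toReal) atTop (𝓝 τ) →
      Tendsto (fun m : ℕ =>
          ((ν.prod Θ) {p | ∀ i < m, X1 T z ε i p ≤ v m}).toReal) atTop (𝓝 (Real.exp (-τ))))
    (u : ℝ) :
    Tendsto (fun m : ℕ =>
        ((ν.prod Θ) {p | ∀ i < m, X1 T z ε i p ≤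
          u + Real.log ((m : ℝ) * (ν (Metric.ball z ε)).toReal / ε)}).toReal)
      atTop (𝓝 (Real.exp (-Real.exp (-u)))) :=
  hEVL _ (Real.exp_pos _) _
    (tendsto_mul_prod_lt_X1_zero T ν hΘ z hε0 (by linarith) hpos hbd u)

/-- On the circle, with `θ` uniform on `[-1,1]`, `ε ∈ (0, 1/4]`,
`ν(B(z,ε)) > 0` and `ν{dist(·,z) = ε} = 0`, suppose the process satisfies an extreme value
law: for every `τ > 0` and every sequence `(v_m)` with `m·ℙ(X_0 > v_m) → τ`, one has
`ℙ(M_m ≤ v_m) → e^{−τ}`. Then, with `b_m = log(m ν(B(z,ε))/ε)`, for every `u`,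
`ℙ(M_m ≤ u + b_m) → exp(−e^{−u})` (the Gumbel law, with `a_m = 1`). -/
theorem statement_8 (T : AddCircle (1 : ℝ) → AddCircle (1 : ℝ)) (hT : Measurable T)
    (ν : Measure (AddCircle (1 : ℝ))) [IsProbabilityMeasure ν]
    (Θ : Measure (ℕ → ℝ)) [IsProbabilityMeasure Θ]
    (hΘ : IsIIDProduct1 unifIcc Θ)
    (z : AddCircle (1 : ℝ)) (ε : ℝ) (hε0 : 0 < ε) (hε : ε ≤ 1 / 4)
    (hpos : 0 < ν (Metric.ball z ε))
    (hbd : ν {x | dist x z = ε} = 0)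
    (hEVL : ∀ τ : ℝ, 0 < τ → ∀ v : ℕ → ℝ,
      Tendsto (fun m : ℕ =>
          (m : ℝ) * ((ν.prod Θ) {p | v m < X1 T z ε 0 p}).toReal) atTop (𝓝 τ) →
      Tendsto (fun m : ℕ =>
          ((ν.prod Θ) {p | ∀ i < m, X1 T z ε i p ≤ v m}).toReal) atTop (𝓝 (Real.exp (-τ))))
    (u : ℝ) :
    Tendsto (fun m : ℕ =>
        ((ν.prod Θ) {p | ∀ i < m, X1 T z ε i p ≤
          u + Real.log ((m : ℝ) * (ν (Metric.ball z ε)).toReal / ε)}).toReal)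
      atTop (𝓝 (Real.exp (-Real.exp (-u)))) :=
  statement_8_general T ν Θ hΘ z ε hε0 hε hpos hbd hEVL u
end
end

section
/- Suppose (T, ν) has polynomial decay of correlations with constant C > 0. Let τ > 0 and let (u_m) be a sequence of reals with m · ℙ(X_0 > u_m) → τ as m → ∞, and let (α_m) and (k_m) be sequences of positive integers with α_m → ∞ and k_m → ∞. Then m · Σ_{j=α_m}^{⌊m/k_m⌋} ℙ(X_0 > u_m and X_j > u_m) → 0 as m → ∞ (the sum being understood as 0 when α_m > ⌊m/k_m⌋). -/
open MeasureTheory Metric Set Filter Topology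

noncomputable section

/-! Conditioning on the base point `x`, the noise coordinates `ξ_0` and `ξ_j` are independent, so
`ℙ(X_0 > u, X_j > u) = ∫ G(x) G(T^j x) dν` with `G(y) = θ{w | -log dist(y + εw, z) > u}`, while
`ℙ(X_0 > u) = ∫ G dν =: p`. Decay of correlations applied to `g = h = G` bounds the joint
probability by `p² + C p / j²`. Summing over `α_m ≤ j ≤ m / k_m` and multiplying by `m` gives at
most `(m p)² / k_m + 2 C (m p) / α_m`, which tends to `0` since `m p → τ`. -/

section IIDProduct

variable {E : Type*} [MeasurableSpace E] {θ : Measure E} [IsProbabilityMeasure θ]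
  {Θ : Measure (ℕ → E)}

theorem measure_coord_mem_and_coord_mem
    (hΘ : ∀ n : ℕ, Θ.map (fun ξ (i : Fin n) => ξ i) = Measure.pi fun _ : Fin n => θ)
    {i j : ℕ} (hij : i ≠ j) {s t : Set E} (hs : MeasurableSet s) (ht : MeasurableSet t) :
    Θ {ξ | ξ i ∈ s ∧ ξ j ∈ t} = θ s * θ t := by
  let n := i + j + 1
  let a : Fin n := ⟨i, by omega⟩
  let b : Fin n := ⟨j, by omega⟩
  have hab : a ≠ b := fun h => hij (Fin.mk.inj_iff.mp h)
  let c : Fin n → Set E := fun l => if l = a then s else if l = b then t else univ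
  have hc : ∀ l, MeasurableSet (c l) := fun l => by
    simp only [c]; split_ifs <;> first | exact hs | exact ht | exact .univ
  have hcyl : {ξ : ℕ → E | ξ i ∈ s ∧ ξ j ∈ t} =
      (fun ξ (l : Fin n) => ξ l) ⁻¹' univ.pi c := by
    ext ξ
    simp only [mem_ofPred_eq, mem_preimage, mem_univ_pi]
    refine ⟨fun ⟨hi, hj⟩ l => ?_,
      fun h => ⟨by simpa [c] using h a, by simpa [c, hab.symm] using h b⟩⟩
    simp only [c]
    split_ifs with hla hlb
    · exact hla ▸ hi
    · exact hlb ▸ hj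
    · trivial
  rw [hcyl, ← Measure.map_apply (by fun_prop) (.univ_pi hc), hΘ, Measure.pi_pi,
    Fintype.prod_eq_mul a b hab fun l hl => by simp [c, hl.1, hl.2]]
  simp [c, hab.symm]

theorem measure_coord_mem
    (hΘ : ∀ n : ℕ, Θ.map (fun ξ (i : Fin n) => ξ i) = Measure.pi fun _ : Fin n => θ)
    (i : ℕ) {s : Set E} (hs : MeasurableSet s) :
    Θ {ξ | ξ i ∈ s} = θ s := by
  simpa using measure_coord_mem_and_coord_mem hΘ (Nat.succ_ne_self i).symm hs .univ

end IIDProduct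

section SkewProduct

variable {X W : Type*} [MeasurableSpace X] [MeasurableSpace W]
  {ν : Measure X} {θ : Measure W} [IsProbabilityMeasure θ]
  {Θ : Measure (ℕ → W)} [SFinite Θ] {T : X → X} {A : Set (X × W)}

theorem measurableSet_orbit_mem (hT : Measurable T) (hA : MeasurableSet A) (i : ℕ) :
    MeasurableSet {p : X × (ℕ → W) | (T^[i] p.1, p.2 i) ∈ A} :=
  hA.preimage (((hT.iterate i).comp measurable_fst).prodMk
    ((measurable_pi_apply i).comp measurable_snd))

theorem measurable_measureReal_prodMk_left (hA : MeasurableSet A) :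
    Measurable fun x => θ.real (Prod.mk x ⁻¹' A) :=
  (measurable_measure_prodMk_left hA).ennreal_toReal

variable (hΘ : ∀ n : ℕ, Θ.map (fun ξ (i : Fin n) => ξ i) = Measure.pi fun _ : Fin n => θ)
include hΘ

theorem prod_real_orbit_mem (hT : Measurable T) (hA : MeasurableSet A) (i : ℕ) :
    (ν.prod Θ).real {p | (T^[i] p.1, p.2 i) ∈ A} =
      ∫ x, θ.real (Prod.mk (T^[i] x) ⁻¹' A) ∂ν := by
  rw [measureReal_def, Measure.prod_apply (measurableSet_orbit_mem hT hA i)]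
  exact (congrArg ENNReal.toReal (lintegral_congr fun x =>
    measure_coord_mem hΘ i (measurable_prodMk_left hA))).trans (integral_toReal
      ((measurable_measure_prodMk_left hA).comp (hT.iterate i)).aemeasurable
      (ae_of_all _ fun _ => measure_lt_top _ _)).symm

theorem prod_real_orbit_mem_and_orbit_mem (hT : Measurable T) (hA : MeasurableSet A)
    {i j : ℕ} (hij : i ≠ j) :
    (ν.prod Θ).real {p | (T^[i] p.1, p.2 i) ∈ A ∧ (T^[j] p.1, p.2 j) ∈ A} =
      ∫ x, θ.real (Prod.mk (T^[i] x) ⁻¹' A) * θ.real (Prod.mk (T^[j] x) ⁻¹' A) ∂ν := by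
  have hmeas : ∀ l, Measurable fun x => θ (Prod.mk (T^[l] x) ⁻¹' A) := fun l =>
    (measurable_measure_prodMk_left hA).comp (hT.iterate l)
  have hs : MeasurableSet {p : X × (ℕ → W) | (T^[i] p.1, p.2 i) ∈ A ∧ (T^[j] p.1, p.2 j) ∈ A} :=
    (measurableSet_orbit_mem hT hA i).inter (measurableSet_orbit_mem hT hA j)
  rw [measureReal_def, Measure.prod_apply hs]
  refine (congrArg ENNReal.toReal (lintegral_congr fun x =>
    measure_coord_mem_and_coord_mem hΘ hij (measurable_prodMk_left hA)
      (measurable_prodMk_left hA))).trans ?_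
  rw [← integral_toReal (f := fun x => θ (Prod.mk (T^[i] x) ⁻¹' A) * θ (Prod.mk (T^[j] x) ⁻¹' A))
    ((hmeas i).mul (hmeas j)).aemeasurable
    (ae_of_all _ fun _ => ENNReal.mul_lt_top (measure_lt_top _ _) (measure_lt_top _ _))]
  simp only [ENNReal.toReal_mul, measureReal_def]

end SkewProduct

theorem DecayCor.integral_mul_comp_le {d : ℕ} {T : Torus d → Torus d} {ν : Measure (Torus d)}
    [IsFiniteMeasure ν] {C : ℝ} (h : DecayCor T ν C) {g : Torus d → ℝ} (hg : Measurable g)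
    (hg0 : ∀ x, 0 ≤ g x) (hg1 : ∀ x, g x ≤ 1) {t : ℕ} (ht : 1 ≤ t) :
    ∫ x, g x * g (T^[t] x) ∂ν ≤ (∫ x, g x ∂ν) ^ 2 + C * (∫ x, g x ∂ν) / (t : ℝ) ^ 2 := by
  have hbound : ∀ x, |g x| ≤ 1 := fun x => abs_le.2 ⟨by linarith [hg0 x], hg1 x⟩
  have hdecay := h g (.of_bound hg.aestronglyMeasurable 1 (ae_of_all _ hbound)) g hg 1 hbound t ht
  simp only [abs_of_nonneg (hg0 _), mul_one] at hdecay
  linarith [(abs_le.mp hdecay).2]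

theorem sum_Icc_inv_sq_le {a : ℕ} (ha : 1 ≤ a) (N : ℕ) :
    ∑ j ∈ Finset.Icc a N, ((j : ℝ) ^ 2)⁻¹ ≤ 2 / a := by
  have hsub : Finset.Icc a N ⊆ Finset.Ioo (a - 1) (N + 1) := fun j hj => by
    simp only [Finset.mem_Icc, Finset.mem_Ioo] at hj ⊢; omega
  calc ∑ j ∈ Finset.Icc a N, ((j : ℝ) ^ 2)⁻¹
      ≤ ∑ j ∈ Finset.Ioo (a - 1) (N + 1), ((j : ℝ) ^ 2)⁻¹ :=
        Finset.sum_le_sum_of_subset_of_nonneg hsub fun _ _ _ => by positivity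
    _ ≤ 2 / ((a - 1 : ℕ) + 1) := sum_Ioo_inv_sq_le _ _
    _ = 2 / a := by rw [Nat.cast_sub ha, Nat.cast_one, sub_add_cancel]

theorem sum_Icc_sq_add_div_sq_le {a : ℕ} (ha : 1 ≤ a) (N : ℕ) {q C : ℝ} (hq : 0 ≤ q)
    (hC : 0 ≤ C) :
    ∑ j ∈ Finset.Icc a N, (q ^ 2 + C * q / (j : ℝ) ^ 2) ≤ N * q ^ 2 + C * q * (2 / a) := by
  have hcard : ((Finset.Icc a N).card : ℝ) ≤ N := by
    rw [Nat.card_Icc]; exact_mod_cast by omega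
  simp only [Finset.sum_add_distrib, Finset.sum_const, nsmul_eq_mul, div_eq_mul_inv,
    ← Finset.mul_sum]
  gcongr
  simpa only [div_eq_mul_inv] using sum_Icc_inv_sq_le ha N

theorem tendsto_mul_sum_Icc_sq_add_div_sq {p : ℕ → ℝ} {C τ : ℝ} {α k : ℕ → ℕ}
    (hp : ∀ m, 0 ≤ p m) (hC : 0 ≤ C) (hu : Tendsto (fun m : ℕ => (m : ℝ) * p m) atTop (𝓝 τ))
    (hα : Tendsto α atTop atTop) (hk : Tendsto k atTop atTop) :
    Tendsto (fun m : ℕ => (m : ℝ) *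
      ∑ j ∈ Finset.Icc (α m) (m / k m), (p m ^ 2 + C * p m / (j : ℝ) ^ 2)) atTop (𝓝 0) := by
  have hinv : ∀ {f : ℕ → ℕ}, Tendsto f atTop atTop →
      Tendsto (fun m => (f m : ℝ)⁻¹) atTop (𝓝 0) := fun hf =>
    tendsto_inv_atTop_zero.comp (tendsto_natCast_atTop_atTop.comp hf)
  have hbound : Tendsto (fun m : ℕ => ((m : ℝ) * p m) ^ 2 * (k m : ℝ)⁻¹ +
      C * ((m : ℝ) * p m) * 2 * (α m : ℝ)⁻¹) atTop (𝓝 0) := by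
    simpa using ((hu.pow 2).mul (hinv hk)).add (((hu.const_mul C).mul_const 2).mul (hinv hα))
  refine squeeze_zero' (.of_forall fun m => mul_nonneg m.cast_nonneg
    (Finset.sum_nonneg fun _ _ => by have := hp m; positivity)) ?_ hbound
  filter_upwards [hα.eventually_ge_atTop 1] with m hm
  calc (m : ℝ) * ∑ j ∈ Finset.Icc (α m) (m / k m), (p m ^ 2 + C * p m / (j : ℝ) ^ 2)
      ≤ m * ((m / k m : ℕ) * p m ^ 2 + C * p m * (2 / α m)) :=
        mul_le_mul_of_nonneg_left (sum_Icc_sq_add_div_sq_le hm _ (hp m) hC) m.cast_nonneg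
    _ ≤ m * ((m / k m : ℝ) * p m ^ 2 + C * p m * (2 / α m)) := by
        gcongr; exact Nat.cast_div_le
    _ = ((m : ℝ) * p m) ^ 2 * (k m : ℝ)⁻¹ + C * ((m : ℝ) * p m) * 2 * (α m : ℝ)⁻¹ := by ring

/-- `X_i(x, ξ) > a` exactly when `(T^i x, ξ_i) ∈ exceedanceSet z ε a`. -/
def exceedanceSet {d : ℕ} (z : Torus d) (ε a : ℝ) : Set (Torus d × EuclideanSpace ℝ (Fin d)) :=
  {q | a < -Real.log (tdist (tr q.1 (ε • q.2)) z)}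

theorem measurableSet_exceedanceSet {d : ℕ} (z : Torus d) (ε a : ℝ) :
    MeasurableSet (exceedanceSet z ε a) := by
  have hcont : Continuous fun q : Torus d × EuclideanSpace ℝ (Fin d) =>
      tdist (tr q.1 (ε • q.2)) z := by
    unfold tdist tr
    fun_prop
  exact measurableSet_lt measurable_const (Real.measurable_log.comp hcont.measurable).neg

theorem statement_14_general {d : ℕ}
    (T : Torus d → Torus d) (hT : Measurable T)
    (ν : Measure (Torus d)) [IsProbabilityMeasure ν]
    (θ : Measure (EuclideanSpace ℝ (Fin d))) [IsProbabilityMeasure θ]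
    (Θ : Measure (ℕ → EuclideanSpace ℝ (Fin d))) [IsProbabilityMeasure Θ]
    (hΘ : IsIIDProduct θ Θ)
    (ε : ℝ) (z : Torus d)
    (C : ℝ) (hC : 0 < C) (hdecay : DecayCor T ν C)
    (τ : ℝ) (u : ℕ → ℝ)
    (hu : Tendsto (fun m : ℕ =>
        (m : ℝ) * ((ν.prod Θ) {p | u m < Xobs T z ε 0 p}).toReal) atTop (𝓝 τ))
    (α : ℕ → ℕ) (hα : Tendsto α atTop atTop)
    (k : ℕ → ℕ) (hk : Tendsto k atTop atTop) :
    Tendsto (fun m : ℕ => (m : ℝ) * ∑ j ∈ Finset.Icc (α m) (m / k m),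
        ((ν.prod Θ) {p | u m < Xobs T z ε 0 p ∧ u m < Xobs T z ε j p}).toReal)
      atTop (𝓝 0) := by
  have hA := fun m => measurableSet_exceedanceSet z ε (u m)
  have hp : ∀ m, ((ν.prod Θ) {p | u m < Xobs T z ε 0 p}).toReal =
      ∫ x, θ.real (Prod.mk x ⁻¹' exceedanceSet z ε (u m)) ∂ν := fun m =>
    prod_real_orbit_mem hΘ hT (hA m) 0
  have hpair : ∀ m j, 1 ≤ j →
      ((ν.prod Θ) {p | u m < Xobs T z ε 0 p ∧ u m < Xobs T z ε j p}).toReal ≤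
        ((ν.prod Θ) {p | u m < Xobs T z ε 0 p}).toReal ^ 2 +
          C * ((ν.prod Θ) {p | u m < Xobs T z ε 0 p}).toReal / (j : ℝ) ^ 2 := by
    intro m j hj
    rw [hp]
    exact (prod_real_orbit_mem_and_orbit_mem hΘ hT (hA m) (by omega : 0 ≠ j)).trans_le
      (hdecay.integral_mul_comp_le (measurable_measureReal_prodMk_left (hA m))
        (fun _ => measureReal_nonneg) (fun _ => measureReal_le_one) hj)
  refine squeeze_zero' (.of_forall fun m => mul_nonneg m.cast_nonneg
    (Finset.sum_nonneg fun _ _ => ENNReal.toReal_nonneg)) ?_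
    (tendsto_mul_sum_Icc_sq_add_div_sq (fun _ => ENNReal.toReal_nonneg) hC.le hu hα hk)
  filter_upwards [hα.eventually_ge_atTop 1] with m hm
  gcongr with j hj
  exact hpair m j (hm.trans (Finset.mem_Icc.mp hj).1)

/-- If `(T, ν)` has polynomial decay of correlations with constant
`C > 0`, `m·ℙ(X_0 > u_m) → τ > 0`, and `(α_m)`, `(k_m)` are sequences of positive
integers tending to `∞`, then `m · Σ_{j=α_m}^{⌊m/k_m⌋} ℙ(X_0 > u_m, X_j > u_m) → 0`
(the sum being `0` when `α_m > ⌊m/k_m⌋`). -/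
theorem statement_14 {d : ℕ} (hd : 1 ≤ d)
    (T : Torus d → Torus d) (hT : Measurable T)
    (ν : Measure (Torus d)) [IsProbabilityMeasure ν]
    (θ : Measure (EuclideanSpace ℝ (Fin d))) [IsProbabilityMeasure θ]
    (hθS : θ (Metric.closedBall 0 1) = 1)
    (Θ : Measure (ℕ → EuclideanSpace ℝ (Fin d))) [IsProbabilityMeasure Θ]
    (hΘ : IsIIDProduct θ Θ)
    (ε : ℝ) (hε : 0 < ε) (z : Torus d)
    (C : ℝ) (hC : 0 < C) (hdecay : DecayCor T ν C)
    (τ : ℝ) (hτ : 0 < τ) (u : ℕ → ℝ)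
    (hu : Tendsto (fun m : ℕ =>
        (m : ℝ) * ((ν.prod Θ) {p | u m < Xobs T z ε 0 p}).toReal) atTop (𝓝 τ))
    (α : ℕ → ℕ) (hα0 : ∀ m, 0 < α m) (hα : Tendsto α atTop atTop)
    (k : ℕ → ℕ) (hk0 : ∀ m, 0 < k m) (hk : Tendsto k atTop atTop) :
    Tendsto (fun m : ℕ => (m : ℝ) * ∑ j ∈ Finset.Icc (α m) (m / k m),
        ((ν.prod Θ) {p | u m < Xobs T z ε 0 p ∧ u m < Xobs T z ε j p}).toReal)
      atTop (𝓝 0) :=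
  statement_14_general T hT ν θ Θ hΘ ε z C hC hdecay τ u hu α hα k hk
end
end
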